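/- arXiv:2308.03308 — 4 statements merged into one kernel-verified Lean document; each statement's English description precedes it below -/
import Mathlib

section
/- Let A be an OCA with k states and let K = lcm{1, …, k}. If a CTL+Sync formula ψ is (t, p)-periodic with respect to A, where p ≥ 1, then the formula EX ψ is (t + p, K·p)-periodic with respect to A. -/
/-- A transition of a one-counter automaton: source state, guard
(`false` = "=0", `true` = ">0"), counter effect, target state. -/
abbrev OTrans (St : Type) := St × Bool × ℤ × St

structure OCA (St AP : Type) where
  delta : Set (OTrans St)
  label : St → AP
  effect_mem : ∀ t ∈ delta, t.2.2.1 = -1 ∨ t.2.2.1 = 0 ∨ t.2.2.1 = 1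
  eq0_effect : ∀ t ∈ delta, t.2.1 = false → t.2.2.1 = 0 ∨ t.2.2.1 = 1
  total_eq0 : ∀ s : St, ∃ e s', (s, false, e, s') ∈ delta
  total_gt0 : ∀ s : St, ∃ e s', (s, true, e, s') ∈ delta

namespace OCA

variable {St AP : Type}

def StepVia (A : OCA St AP) (t : OTrans St) (c c' : St × ℕ) : Prop :=
  t ∈ A.delta ∧ t.1 = c.1 ∧ t.2.2.2 = c'.1 ∧
    (if t.2.1 then 0 < c.2 else c.2 = 0) ∧ (c'.2 : ℤ) = (c.2 : ℤ) + t.2.2.1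

def Step (A : OCA St AP) (c c' : St × ℕ) : Prop := ∃ t, A.StepVia t c c'

def ReachN (A : OCA St AP) : ℕ → St × ℕ → St × ℕ → Prop
  | 0, c, c' => c = c'
  | n + 1, c, c' => ∃ c'', A.Step c c'' ∧ A.ReachN n c'' c'

end OCA

inductive CTLSync (AP : Type) : Type where
  | tt : CTLSync AP
  | atom : AP → CTLSync AP
  | and : CTLSync AP → CTLSync AP → CTLSync AP
  | not : CTLSync AP → CTLSync AP
  | EX : CTLSync AP → CTLSync AP
  | EU : CTLSync AP → CTLSync AP → CTLSync AP
  | AU : CTLSync AP → CTLSync AP → CTLSync AP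
  | UA : CTLSync AP → CTLSync AP → CTLSync AP
  | UE : CTLSync AP → CTLSync AP → CTLSync AP

def SatTS {C AP : Type} (step : C → C → Prop) (label : C → AP) :
    CTLSync AP → C → Prop
  | .tt, _ => True
  | .atom q, c => label c = q
  | .and φ ψ, c => SatTS step label φ c ∧ SatTS step label ψ c
  | .not φ, c => ¬ SatTS step label φ c
  | .EX φ, c => ∃ c', step c c' ∧ SatTS step label φ c'
  | .EU φ ψ, c => ∃ τ : ℕ → C, τ 0 = c ∧ (∀ i, step (τ i) (τ (i + 1))) ∧
      ∃ k, SatTS step label ψ (τ k) ∧ ∀ j < k, SatTS step label φ (τ j)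
  | .AU φ ψ, c => ∀ τ : ℕ → C, τ 0 = c → (∀ i, step (τ i) (τ (i + 1))) →
      ∃ k, SatTS step label ψ (τ k) ∧ ∀ j < k, SatTS step label φ (τ j)
  | .UA φ ψ, c => ∃ k, ∀ τ : ℕ → C, τ 0 = c → (∀ i < k, step (τ i) (τ (i + 1))) →
      SatTS step label ψ (τ k) ∧ ∀ j < k, SatTS step label φ (τ j)
  | .UE φ ψ, c => ∃ k, ∀ j < k, ∃ τ : ℕ → C, τ 0 = c ∧
      (∀ i < k, step (τ i) (τ (i + 1))) ∧
      SatTS step label φ (τ j) ∧ SatTS step label ψ (τ k)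

def OCA.Sat {St AP : Type} (A : OCA St AP) (φ : CTLSync AP) (c : St × ℕ) : Prop :=
  SatTS A.Step (fun c => A.label c.1) φ c

def Periodic {St AP : Type} (A : OCA St AP) (φ : CTLSync AP) (t p : ℕ) : Prop :=
  ∀ (s : St) (v v' : ℕ), t < v → t < v' → v % p = v' % p →
    (A.Sat φ (s, v) ↔ A.Sat φ (s, v'))

def lcmTo (N : ℕ) : ℕ := (Finset.Icc 1 N).lcm id

/-!
A step from a positive counter value uses a `>0`-guarded transition, which can be replayed
from any other positive value with the same effect, and every step changes the counter by at
most one. So each successor of `(s, v)` has a counterpart among the successors of `(s, v')`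
whose counter value is congruent to its own modulo `p`, both staying above `t`: `EX ψ` is
already `(t + 1, p)`-periodic.
-/

namespace OCA

variable {St AP : Type} {A : OCA St AP}

theorem Step.le_add_one {s s' : St} {v w : ℕ} (hstep : A.Step (s, v) (s', w)) : v ≤ w + 1 := by
  obtain ⟨⟨src, g, e, tgt⟩, htr, -, -, -, heff⟩ := hstep
  have he : e = -1 ∨ e = 0 ∨ e = 1 := A.effect_mem _ htr
  simp only at heff
  omega

theorem Step.exists_of_pos {s s' : St} {v w v' : ℕ} (hstep : A.Step (s, v) (s', w))
    (hv : 0 < v) (hv' : 0 < v') : ∃ w', A.Step (s, v') (s', w') ∧ w + v' = w' + v := by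
  obtain ⟨⟨src, g, e, tgt⟩, htr, hsrc, htgt, hguard, heff⟩ := hstep
  have he : e = -1 ∨ e = 0 ∨ e = 1 := A.effect_mem _ htr
  have hg : g = true := by
    cases g
    · simp only [Bool.false_eq_true, if_false] at hguard
      omega
    · rfl
  subst hg
  simp only at heff
  refine ⟨((v' : ℤ) + e).toNat, ⟨(src, true, e, tgt), htr, hsrc, htgt, hv', ?_⟩, ?_⟩
  · dsimp only
    omega
  · omega

theorem sat_EX {ψ : CTLSync AP} {c : St × ℕ} :
    A.Sat (.EX ψ) c ↔ ∃ c', A.Step c c' ∧ A.Sat ψ c' :=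
  Iff.rfl

end OCA

section Periodic

variable {St AP : Type} {A : OCA St AP}

theorem Periodic.mono {φ : CTLSync AP} {t t' p q : ℕ} (h : Periodic A φ t p) (ht : t ≤ t')
    (hpq : p ∣ q) : Periodic A φ t' q := fun s v v' hv hv' hvv =>
  h s v v' (by omega) (by omega) (Nat.ModEq.of_dvd hpq hvv)

theorem Periodic.sat_EX_of_sat_EX {ψ : CTLSync AP} {t p : ℕ} (h : Periodic A ψ t p) {s : St}
    {v v' : ℕ} (hv : t + 1 < v) (hv' : t + 1 < v') (hvv : v ≡ v' [MOD p])
    (hsat : A.Sat (.EX ψ) (s, v)) : A.Sat (.EX ψ) (s, v') := by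
  obtain ⟨⟨s', w⟩, hstep, hψ⟩ := OCA.sat_EX.mp hsat
  obtain ⟨w', hstep', hshift⟩ := hstep.exists_of_pos (v' := v') (by omega) (by omega)
  have hww : w ≡ w' [MOD p] := Nat.ModEq.add_right_cancel hvv.symm (by rw [hshift])
  have hw : t < w := by have := hstep.le_add_one; omega
  have hw' : t < w' := by have := hstep'.le_add_one; omega
  exact OCA.sat_EX.mpr ⟨(s', w'), hstep', (h s' w w' hw hw' hww).mp hψ⟩

theorem Periodic.EX {ψ : CTLSync AP} {t p : ℕ} (h : Periodic A ψ t p) :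
    Periodic A (.EX ψ) (t + 1) p := fun _ _ _ hv hv' hvv =>
  ⟨h.sat_EX_of_sat_EX hv hv' hvv, h.sat_EX_of_sat_EX hv' hv hvv.symm⟩

end Periodic

/-- If `ψ` is `(t, p)`-periodic w.r.t. an OCA `A` with `k`
states and `K = lcm {1, …, k}`, then `EX ψ` is `(t + p, K·p)`-periodic. -/
theorem EX_periodic {St AP : Type} [Fintype St] (A : OCA St AP)
    (ψ : CTLSync AP) (t p : ℕ) (hp : 1 ≤ p) (h : Periodic A ψ t p) :
    Periodic A (CTLSync.EX ψ) (t + p) (lcmTo (Fintype.card St) * p) :=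
  h.EX.mono (by omega) (dvd_mul_left p _)
end

section
/- Let b ≥ 1, let e₁, e₂ be integers and ℓ₁, ℓ₂ naturals with 1 ≤ ℓᵢ ≤ b and |eᵢ| ≤ ℓᵢ for i = 1, 2, and suppose e₁·ℓ₂ < e₂·ℓ₁ (i.e., e₁/ℓ₁ < e₂/ℓ₂). Let x be a positive multiple of lcm{1, …, 2b²}. Then there exist integers k₁, k₂ with |k₁| ≤ b·x, |k₂| ≤ b·x, k₁·e₁ + k₂·e₂ = 0, and k₁·ℓ₁ + k₂·ℓ₂ = x. -/
theorem dvd_lcmTo {n N : ℕ} (hn : 1 ≤ n) (hnN : n ≤ N) : n ∣ lcmTo N :=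
  Finset.dvd_lcm (f := id) (Finset.mem_Icc.mpr ⟨hn, hnN⟩)

theorem Int.dvd_of_lcmTo_dvd {d : ℤ} {N x : ℕ} (hd : 0 < d) (hdN : d ≤ N)
    (hx : lcmTo N ∣ x) : d ∣ (x : ℤ) := by
  lift d to ℕ using hd.le
  exact Int.natCast_dvd_natCast.mpr <| (dvd_lcmTo (by omega) (by omega)).trans hx

section LinearOrderedRing

variable {R : Type*} [CommRing R] [LinearOrder R] [IsStrictOrderedRing R]

theorem mul_sub_mul_le_two_mul_of_abs_le {a₁ a₂ b₁ b₂ : R} (h₁ : |a₁| ≤ b₁) (h₂ : |a₂| ≤ b₂) :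
    a₂ * b₁ - a₁ * b₂ ≤ 2 * (b₁ * b₂) := by
  have hb₁ : 0 ≤ b₁ := (abs_nonneg a₁).trans h₁
  have hb₂ : 0 ≤ b₂ := (abs_nonneg a₂).trans h₂
  have hpos : a₂ * b₁ ≤ b₂ * b₁ :=
    mul_le_mul_of_nonneg_right ((le_abs_self a₂).trans h₂) hb₁
  have hneg : -a₁ * b₂ ≤ b₁ * b₂ :=
    mul_le_mul_of_nonneg_right ((neg_le_abs a₁).trans h₁) hb₂
  linarith

theorem abs_mul_le_mul_mul_of_one_le {a b d t : R} (hab : |a| ≤ b) (hd : 1 ≤ d) (ht : 0 ≤ t) :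
    |a * t| ≤ b * (d * t) :=
  calc |a * t| = |a| * t := by rw [abs_mul, abs_of_nonneg ht]
    _ ≤ b * t := mul_le_mul_of_nonneg_right hab ht
    _ ≤ b * (d * t) :=
      mul_le_mul_of_nonneg_left (le_mul_of_one_le_left ht hd) ((abs_nonneg a).trans hab)

end LinearOrderedRing

theorem cycle_combination_for_length_general (b : ℕ)
    (e₁ e₂ : ℤ) (ℓ₁ ℓ₂ : ℕ)
    (hℓ₁b : ℓ₁ ≤ b) (hℓ₂b : ℓ₂ ≤ b)
    (he₁ : |e₁| ≤ (ℓ₁ : ℤ)) (he₂ : |e₂| ≤ (ℓ₂ : ℤ))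
    (h12 : e₁ * (ℓ₂ : ℤ) < e₂ * (ℓ₁ : ℤ))
    (x : ℕ) (hdvd : lcmTo (2 * b ^ 2) ∣ x) :
    ∃ k₁ k₂ : ℤ, |k₁| ≤ (b : ℤ) * (x : ℤ) ∧ |k₂| ≤ (b : ℤ) * (x : ℤ) ∧
      k₁ * e₁ + k₂ * e₂ = 0 ∧ k₁ * (ℓ₁ : ℤ) + k₂ * (ℓ₂ : ℤ) = (x : ℤ) := by
  set d : ℤ := e₂ * ℓ₁ - e₁ * ℓ₂
  have hd : 0 < d := sub_pos.mpr h12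
  have hdb : d ≤ ((2 * b ^ 2 : ℕ) : ℤ) :=
    calc d ≤ 2 * ((ℓ₁ : ℤ) * ℓ₂) := mul_sub_mul_le_two_mul_of_abs_le he₁ he₂
      _ ≤ ((2 * b ^ 2 : ℕ) : ℤ) := by push_cast; rw [sq]; gcongr
  obtain ⟨t, hx⟩ := Int.dvd_of_lcmTo_dvd hd hdb hdvd
  have ht : 0 ≤ t := nonneg_of_mul_nonneg_right (hx ▸ x.cast_nonneg) hd
  refine ⟨e₂ * t, -e₁ * t, ?_, ?_, by ring, by rw [hx]; ring⟩
  · rw [hx]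
    exact abs_mul_le_mul_mul_of_one_le (he₂.trans (mod_cast hℓ₂b)) hd ht
  · rw [hx, neg_mul, abs_neg]
    exact abs_mul_le_mul_mul_of_one_le (he₁.trans (mod_cast hℓ₁b)) hd ht

/-- Cycle combination for lengths: if `e₁/ℓ₁ < e₂/ℓ₂` with
`1 ≤ ℓᵢ ≤ b` and `|eᵢ| ≤ ℓᵢ`, and `x` is a positive multiple of
`lcm {1, …, 2b²}`, then there are integers `k₁, k₂` with `|kᵢ| ≤ b·x` such that
adding `kᵢ` repetitions of cycle `i` (removing when negative) changes the total
length by exactly `x` and the total effect by `0`. -/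
theorem cycle_combination_for_length (b : ℕ) (hb : 1 ≤ b)
    (e₁ e₂ : ℤ) (ℓ₁ ℓ₂ : ℕ)
    (hℓ₁ : 1 ≤ ℓ₁) (hℓ₁b : ℓ₁ ≤ b) (hℓ₂ : 1 ≤ ℓ₂) (hℓ₂b : ℓ₂ ≤ b)
    (he₁ : |e₁| ≤ (ℓ₁ : ℤ)) (he₂ : |e₂| ≤ (ℓ₂ : ℤ))
    (h12 : e₁ * (ℓ₂ : ℤ) < e₂ * (ℓ₁ : ℤ))
    (x : ℕ) (hx : 0 < x) (hdvd : lcmTo (2 * b ^ 2) ∣ x) :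
    ∃ k₁ k₂ : ℤ, |k₁| ≤ (b : ℤ) * (x : ℤ) ∧ |k₂| ≤ (b : ℤ) * (x : ℤ) ∧
      k₁ * e₁ + k₂ * e₂ = 0 ∧ k₁ * (ℓ₁ : ℤ) + k₂ * (ℓ₂ : ℤ) = (x : ℤ) :=
  cycle_combination_for_length_general b e₁ e₂ ℓ₁ ℓ₂ hℓ₁b hℓ₂b he₁ he₂ h12 x hdvd
end

section
/- For every natural number b ≥ 2, lcm{1, 2, …, 2b³} > b¹¹. -/
theorem lcmTo_eq_lcmUpto (N : ℕ) : lcmTo N = Nat.lcmUpto N := rfl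

theorem centralBinom_le_lcmTo (n : ℕ) : n.centralBinom ≤ lcmTo (2 * n) := by
  rw [lcmTo_eq_lcmUpto, Nat.centralBinom_eq_two_mul_choose]
  exact Nat.le_of_dvd (Nat.lcmUpto_pos _) (Chebyshev.choose_dvd_lcmUpto (by omega))

theorem lt_centralBinom_of_two_mul_mul_lt_four_pow {n m : ℕ} (hn : 0 < n)
    (h : 2 * n * m < 4 ^ n) : m < n.centralBinom :=
  Nat.lt_of_mul_lt_mul_left (h.trans_le (Nat.four_pow_le_two_mul_self_mul_centralBinom n hn))

theorem two_mul_pow_fourteen_lt_four_pow_cube {b : ℕ} (hb : 2 ≤ b) : 2 * b ^ 14 < 4 ^ b ^ 3 := by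
  obtain ⟨c, rfl⟩ := Nat.exists_eq_add_of_le' hb
  have hexp : 14 * c + 15 < 2 * (c + 2) ^ 3 := by ring_nf; omega
  calc 2 * (c + 2) ^ 14 ≤ 2 * (2 ^ (c + 1)) ^ 14 := by gcongr; exact Nat.lt_two_pow_self
    _ = 2 ^ (14 * c + 15) := by ring
    _ < 2 ^ (2 * (c + 2) ^ 3) := Nat.pow_lt_pow_right (by norm_num) hexp
    _ = 4 ^ (c + 2) ^ 3 := by rw [pow_mul]; norm_num

/-- For every `b ≥ 2`, `lcm {1, …, 2b³} > b¹¹`. -/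
theorem lcm_up_to_two_b_cubed_gt (b : ℕ) (hb : 2 ≤ b) :
    b ^ 11 < lcmTo (2 * b ^ 3) := by
  have hgrowth : 2 * b ^ 3 * b ^ 11 < 4 ^ b ^ 3 :=
    lt_of_eq_of_lt (by ring) (two_mul_pow_fourteen_lt_four_pow_cube hb)
  calc b ^ 11 < (b ^ 3).centralBinom :=
        lt_centralBinom_of_two_mul_mul_lt_four_pow (by positivity) hgrowth
    _ ≤ lcmTo (2 * b ^ 3) := centralBinom_le_lcmTo _
end

section
/- Let τ be a basic path of A, or a prefix of a basic path, valid from a configuration whose counter value is v > cT, let ℓ be the length of τ, and let i ∈ {0, 1, …, m}. If ℓ ≥ 𝔰ᵢ(v) + sT/2 and every counter value along τ is strictly greater than T′, then τ contains, as a contiguous infix, β^{b⁴·P} (that is, b⁴·P consecutive repetitions of β) for some cycle β of length at most b whose slope equals 𝑒_j for some index j > i in the increasing enumeration of all basic slopes. -/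
/-- Consecutiveness of transitions: the target of one is the source of the next. -/
def ChainRel {St : Type} (t t' : OTrans St) : Prop := t.2.2.2 = t'.1

namespace OCA

variable {St AP : Type}

/-- Executing a list of transitions from a configuration (all guards satisfied). -/
def RunsTo (A : OCA St AP) : List (OTrans St) → St × ℕ → St × ℕ → Prop
  | [], c, c' => c = c'
  | t :: ts, c, c' => ∃ c'', A.StepVia t c c'' ∧ A.RunsTo ts c'' c'

end OCA

/-- A nonempty chained list of transitions whose first source equals its last target. -/
def IsCycle {St : Type} (β : List (OTrans St)) : Prop :=
  β ≠ [] ∧ List.Chain' ChainRel β ∧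
    β.head?.map (fun t => t.1) = β.getLast?.map (fun t => t.2.2.2)

/-- A linear path scheme `α₀ β₁* α₁ ⋯ β_k* α_k`:
`head` is `α₀` and `segs` is the list of pairs `(βᵢ, αᵢ)`. -/
structure LPS (St : Type) where
  head : List (OTrans St)
  segs : List (List (OTrans St) × List (OTrans St))

/-- The flattening `α₀ β₁ α₁ ⋯ β_k α_k` of an LPS. -/
def LPS.flat {St : Type} (π : LPS St) : List (OTrans St) :=
  π.head ++ (π.segs.map (fun p => p.1 ++ p.2)).flatten

/-- The size of an LPS is the number of cycles `k`. -/
def LPS.size {St : Type} (π : LPS St) : ℕ := π.segs.length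

/-- `π` is an LPS of the OCA `A`: its flattening is a transition path of `A`
and every `βᵢ` is a cycle. -/
def OCA.IsLPS {St AP : Type} (A : OCA St AP) (π : LPS St) : Prop :=
  (∀ t ∈ π.flat, t ∈ A.delta) ∧ List.Chain' ChainRel π.flat ∧
    ∀ p ∈ π.segs, IsCycle p.1

/-- `c`-fold concatenation of a list with itself. -/
def listPow {α : Type} (β : List α) (c : ℕ) : List α := (List.replicate c β).flatten

/-- `τ` is `π`-shaped: `τ = α₀ β₁^{c₁} α₁ ⋯ β_k^{c_k} α_k` for some counts `cᵢ`. -/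
def LPS.Shaped {St : Type} (π : LPS St) (τ : List (OTrans St)) : Prop :=
  ∃ cs : List ℕ, cs.length = π.segs.length ∧
    τ = π.head ++ ((π.segs.zip cs).map (fun p => listPow p.1.1 p.2 ++ p.1.2)).flatten

/-- The effect of a list of transitions: the sum of the counter effects. -/
def effectOf {St : Type} (τ : List (OTrans St)) : ℤ := (τ.map (fun t => t.2.2.1)).sum

/-- The slope of a list of transitions: its effect divided by its length. -/
def slopeOf {St : Type} (τ : List (OTrans St)) : ℚ :=
  (effectOf τ : ℚ) / (τ.length : ℚ)

/-- The finite set of basic slopes with bound `b`: rationals `x / y` with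
`x ∈ ℤ`, `1 ≤ y ≤ b` and `|x| ≤ y`. -/
noncomputable def basicSlopes (b : ℕ) : Finset ℚ :=
  (((Finset.Icc (-(b : ℤ)) (b : ℤ)) ×ˢ (Finset.Icc 1 b)).image
    (fun p => (p.1 : ℚ) / (p.2 : ℚ))).filter (fun q => |q| ≤ 1)

/-- The increasing enumeration `𝑒₁ < 𝑒₂ < ⋯` of all basic slopes (1-indexed;
out-of-range indices yield the junk value `0`). -/
noncomputable def slopeE (b : ℕ) (i : ℕ) : ℚ := ((basicSlopes b).sort (· ≤ ·)).getD (i - 1) 0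

/-- The number `m` of negative basic slopes. -/
noncomputable def numNegSlopes (b : ℕ) : ℕ := ((basicSlopes b).filter (fun q => q < 0)).card

/-- `B = lcm {1, …, 2b³}`. -/
def lcmB (b : ℕ) : ℕ := (Finset.Icc 1 (2 * b ^ 3)).lcm id

/-- The period `P = B · P′`. -/
def bigP (b P' : ℕ) : ℕ := lcmB b * P'

/-- The segment threshold `sT = b⁹ · P`. -/
def sThresh (b P' : ℕ) : ℕ := b ^ 9 * bigP b P'

/-- The counter threshold `cT = b¹¹ · P`. -/
def cThresh (b P' : ℕ) : ℕ := b ^ 11 * bigP b P'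

/-- The start `𝔰ᵢ(v)` of Segment `i`: `𝔰₀(v) = 0` and, for `i ≥ 1`, writing
`−𝑒ᵢ = xᵢ/yᵢ` in lowest terms, `𝔰ᵢ(v) = ⌊yᵢ (v − T′) / xᵢ⌋ − b⁸·P`. -/
noncomputable def segStart (b T' P' v i : ℕ) : ℤ :=
  if i = 0 then 0
  else ⌊(((-(slopeE b i)).den : ℚ) * ((v : ℚ) - (T' : ℚ)) / ((-(slopeE b i)).num : ℚ))⌋
        - (b : ℤ) ^ 8 * (bigP b P' : ℤ)

/-- The core of a computation tree starting at counter value `v`: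
`⋃_{i=0}^{m} [𝔰ᵢ(v), 𝔰ᵢ(v) + sT)`. -/
def inCore (b T' P' v ℓ : ℕ) : Prop :=
  ∃ i ≤ numNegSlopes b,
    segStart b T' P' v i ≤ (ℓ : ℤ) ∧ (ℓ : ℤ) < segStart b T' P' v i + (sThresh b P' : ℤ)

/-- The largest index `i ∈ {0, …, m}` with `ℓ ∈ [𝔰ᵢ(v), 𝔰ᵢ(v) + sT)`. -/
noncomputable def shiftIdx (b T' P' v ℓ : ℕ) : ℕ :=
  Nat.findGreatest
    (fun i => segStart b T' P' v i ≤ (ℓ : ℤ) ∧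
      (ℓ : ℤ) < segStart b T' P' v i + (sThresh b P' : ℤ))
    (numNegSlopes b)

/-- The shift map between the cores of the trees from `v` and from `v + P`:
`shift(ℓ) = ℓ` on Segment `0` and `shift(ℓ) = ℓ + P·yᵢ/xᵢ` on Segment `i ≥ 1`. -/
noncomputable def shiftFn (b T' P' v ℓ : ℕ) : ℕ :=
  let i := shiftIdx b T' P' v ℓ
  if i = 0 then ℓ
  else ℓ + bigP b P' / (-(slopeE b i)).num.toNat * (-(slopeE b i)).den

/-- `u ≡ u′` w.r.t. threshold `T′` and period `P′`: either both are `≥ T′`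
and `P′` divides their difference, or both are `< T′` and they are equal. -/
def EquivTP (T' P' u u' : ℕ) : Prop :=
  (T' ≤ u ∧ T' ≤ u' ∧ (P' : ℤ) ∣ ((u : ℤ) - (u' : ℤ))) ∨ (u < T' ∧ u' < T' ∧ u = u')

/-- Every counter value along `τ`, executed from `c`, is strictly above `T`. -/
def OCA.CountersAbove {St AP : Type} (A : OCA St AP) (τ : List (OTrans St))
    (c : St × ℕ) (T : ℕ) : Prop :=
  ∀ σ c', σ <+: τ → A.RunsTo σ c c' → T < c'.2

/-- `τ` is a basic path of `A` (w.r.t. the LPS bound `b`) from configuration `c`: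
it is valid from `c` and `π`-shaped for some LPS of flat length at most `b`. -/
def OCA.IsBasic {St AP : Type} (A : OCA St AP) (b : ℕ) (τ : List (OTrans St))
    (c : St × ℕ) : Prop :=
  ∃ (π : LPS St) (c' : St × ℕ),
    A.IsLPS π ∧ π.flat.length ≤ b ∧ π.Shaped τ ∧ A.RunsTo τ c c'

/-! ### Auxiliary lemmas -/

section Helpers

variable {St AP : Type}

lemma listPow_zero (β : List (OTrans St)) : listPow β 0 = [] := rfl

lemma listPow_succ (β : List (OTrans St)) (c : ℕ) :
    listPow β (c + 1) = β ++ listPow β c := by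
  rw [listPow, List.replicate_succ, List.flatten_cons]; rfl

lemma listPow_add (β : List (OTrans St)) (a c : ℕ) :
    listPow β (a + c) = listPow β a ++ listPow β c := by
  rw [listPow, List.replicate_add, List.flatten_append]; rfl

lemma length_listPow (β : List (OTrans St)) (c : ℕ) :
    (listPow β c).length = c * β.length := by
  induction c with
  | zero => simp [listPow_zero]
  | succ n ih => rw [listPow_succ, List.length_append, ih]; ring

lemma effectOf_append (l l' : List (OTrans St)) :
    effectOf (l ++ l') = effectOf l + effectOf l' := by
  simp [effectOf]

lemma effectOf_listPow (β : List (OTrans St)) (c : ℕ) :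
    effectOf (listPow β c) = c * effectOf β := by
  induction c with
  | zero => simp [listPow_zero, effectOf]
  | succ n ih => rw [listPow_succ, effectOf_append, ih]; push_cast; ring

lemma mem_listPow {β : List (OTrans St)} {c : ℕ} {t : OTrans St}
    (h : t ∈ listPow β c) : t ∈ β := by
  simp only [listPow, List.mem_flatten] at h
  obtain ⟨l, hl, ht⟩ := h
  rw [List.eq_of_mem_replicate hl] at ht; exact ht

lemma listPow_prefix_listPow (β : List (OTrans St)) {a d : ℕ} (h : a ≤ d) :
    listPow β a <+: listPow β d := by
  obtain ⟨k, rfl⟩ := Nat.exists_eq_add_of_le h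
  rw [listPow_add]; exact List.prefix_append _ _

lemma effectOf_le_length {l : List (OTrans St)} (h : ∀ t ∈ l, t.2.2.1 ≤ 1) :
    effectOf l ≤ l.length := by
  induction l with
  | nil => simp [effectOf]
  | cons a l ih =>
      have h1 := h a (List.mem_cons_self)
      have h2 := ih (fun t ht => h t (List.mem_cons_of_mem a ht))
      have : effectOf (a :: l) = a.2.2.1 + effectOf l := by simp [effectOf]
      rw [this]; simp only [List.length_cons]; push_cast; omega

lemma neg_length_le_effectOf {l : List (OTrans St)} (h : ∀ t ∈ l, -1 ≤ t.2.2.1) :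
    -(l.length : ℤ) ≤ effectOf l := by
  induction l with
  | nil => simp [effectOf]
  | cons a l ih =>
      have h1 := h a (List.mem_cons_self)
      have h2 := ih (fun t ht => h t (List.mem_cons_of_mem a ht))
      have : effectOf (a :: l) = a.2.2.1 + effectOf l := by simp [effectOf]
      rw [this]; simp only [List.length_cons]; push_cast; omega

lemma runsTo_append (A : OCA St AP) (x y : List (OTrans St)) (c c' : St × ℕ) :
    A.RunsTo (x ++ y) c c' ↔ ∃ m, A.RunsTo x c m ∧ A.RunsTo y m c' := by
  induction x generalizing c with
  | nil =>
      constructor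
      · intro h; exact ⟨c, rfl, h⟩
      · rintro ⟨m, rfl, h⟩; exact h
  | cons a x ih =>
      constructor
      · rintro ⟨c'', hstep, hrest⟩
        obtain ⟨m, h1, h2⟩ := (ih c'').mp hrest
        exact ⟨m, ⟨c'', hstep, h1⟩, h2⟩
      · rintro ⟨m, ⟨c'', hstep, h1⟩, h2⟩
        exact ⟨c'', hstep, (ih c'').mpr ⟨m, h1, h2⟩⟩

lemma runsTo_effect (A : OCA St AP) {l : List (OTrans St)} {c c' : St × ℕ}
    (h : A.RunsTo l c c') : (c'.2 : ℤ) = c.2 + effectOf l := by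
  induction l generalizing c with
  | nil => cases h; simp [effectOf]
  | cons a l ih =>
      obtain ⟨c'', hstep, hrest⟩ := h
      have := ih hrest
      have heff : effectOf (a :: l) = a.2.2.1 + effectOf l := by simp [effectOf]
      rw [heff, this, hstep.2.2.2.2]; ring

lemma runsTo_delta (A : OCA St AP) {l : List (OTrans St)} {c c' : St × ℕ}
    (h : A.RunsTo l c c') : ∀ t ∈ l, t ∈ A.delta := by
  induction l generalizing c with
  | nil => simp
  | cons a l ih =>
      obtain ⟨c'', hstep, hrest⟩ := h
      intro t ht
      rcases List.mem_cons.mp ht with rfl | ht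
      · exact hstep.1
      · exact ih hrest t ht

lemma prefix_append_cases {α : Type} {l x y : List α} (h : l <+: x ++ y) :
    l <+: x ∨ ∃ l', l = x ++ l' ∧ l' <+: y := by
  rcases List.prefix_or_prefix_of_prefix h (List.prefix_append x y) with h1 | h1
  · exact Or.inl h1
  · right
    obtain ⟨l', rfl⟩ := h1
    refine ⟨l', rfl, ?_⟩
    obtain ⟨r, hr⟩ := h
    rw [List.append_assoc] at hr
    exact ⟨r, (List.append_cancel_left hr)⟩

end Helpers
section Helpers2

variable {St : Type}

lemma prefix_listPow {β σ : List (OTrans St)} {c : ℕ} (hβ : β ≠ [])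
    (h : σ <+: listPow β c) :
    ∃ d r, σ = listPow β d ++ r ∧ r.length < β.length := by
  induction c generalizing σ with
  | zero =>
      rw [listPow_zero, List.prefix_nil] at h
      subst h
      exact ⟨0, [], by simp [listPow_zero], by
        simpa using List.length_pos_of_ne_nil hβ⟩
  | succ n ih =>
      rw [listPow_succ] at h
      rcases prefix_append_cases h with h1 | ⟨σ', rfl, h1⟩
      · by_cases heq : σ = β
        · subst heq
          refine ⟨1, [], by simp [listPow, List.replicate_one], by
            simpa using List.length_pos_of_ne_nil hβ⟩
        · refine ⟨0, σ, by simp [listPow_zero], ?_⟩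
          have hle := h1.length_le
          rcases lt_or_eq_of_le hle with h2 | h2
          · exact h2
          · exact absurd (List.prefix_iff_eq_take.mp h1 ▸ (by rw [h2, List.take_length]))
              heq
      · obtain ⟨d, r, rfl, hr⟩ := ih h1
        refine ⟨d + 1, r, ?_, hr⟩
        rw [Nat.add_comm d 1, listPow_add, List.append_assoc]
        congr 1
        simp [listPow, List.replicate_one]

lemma prefix_listPow_append {β α σ : List (OTrans St)} {c : ℕ} (hβ : β ≠ [])
    (h : σ <+: listPow β c ++ α) :
    ∃ d ρ, σ = listPow β d ++ ρ ∧ ρ.length < β.length + α.length := by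
  rcases prefix_append_cases h with h1 | ⟨σ', rfl, h1⟩
  · obtain ⟨d, r, rfl, hr⟩ := prefix_listPow hβ h1
    exact ⟨d, r, rfl, by omega⟩
  · refine ⟨c, σ', rfl, ?_⟩
    have := h1.length_le
    have := List.length_pos_of_ne_nil hβ
    omega

end Helpers2
section Helpers3

variable {St : Type}

lemma slope_mul_length {β : List (OTrans St)} (hβ : β ≠ []) :
    (effectOf β : ℚ) = slopeOf β * β.length := by
  have h : (β.length : ℚ) ≠ 0 :=
    Nat.cast_ne_zero.mpr (List.length_pos_of_ne_nil hβ).ne'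
  rw [slopeOf, div_mul_cancel₀ _ h]

lemma core_lemma (N : ℕ) (e : ℚ) :
    ∀ (ps : List (List (OTrans St) × List (OTrans St))) (cs : List ℕ)
      (σ : List (OTrans St)),
    (∀ p ∈ ps, p.1 ≠ []) →
    (∀ t ∈ σ, t.2.2.1 ≤ 1) →
    σ <+: ((ps.zip cs).map (fun p => listPow p.1.1 p.2 ++ p.1.2)).flatten →
    (∃ p ∈ ps, listPow p.1 N <:+: σ ∧ e < slopeOf p.1) ∨
    (∃ Lb Ls : ℕ, σ.length = Lb + Ls ∧
       Ls ≤ N * (ps.map (fun p => p.1.length)).sum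
            + (ps.map (fun p => p.1.length + p.2.length)).sum ∧
       (effectOf σ : ℚ) ≤ e * Lb + Ls) := by
  intro ps
  induction ps with
  | nil =>
      intro cs σ hne hup h
      simp only [List.zip_nil_left, List.map_nil, List.flatten_nil,
        List.prefix_nil] at h
      subst h
      exact Or.inr ⟨0, 0, by simp, by simp, by simp [effectOf]⟩
  | cons p ps ih =>
      intro cs σ hne hup h
      match cs with
      | [] =>
          simp only [List.zip_nil_right, List.map_nil, List.flatten_nil,
            List.prefix_nil] at h
          subst h
          exact Or.inr ⟨0, 0, by simp, by simp, by simp [effectOf]⟩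
      | c :: cs =>
          simp only [List.zip_cons_cons, List.map_cons, List.flatten_cons] at h
          have hpne : p.1 ≠ [] := hne p (List.mem_cons_self)
          rcases prefix_append_cases h with h1 | ⟨σ', rfl, h1⟩
          · -- σ within the first block
            obtain ⟨d, ρ, rfl, hρ⟩ := prefix_listPow_append hpne h1
            have hupρ : ∀ t ∈ ρ, t.2.2.1 ≤ 1 := fun t ht =>
              hup t (List.mem_append_right _ ht)
            have heffρ : (effectOf ρ : ℚ) ≤ (ρ.length : ℚ) := by
              exact_mod_cast effectOf_le_length hupρ
            by_cases hgood : N ≤ d ∧ e < slopeOf p.1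
            · refine Or.inl ⟨p, List.mem_cons_self, ?_, hgood.2⟩
              exact ((listPow_prefix_listPow p.1 hgood.1).trans
                (List.prefix_append _ _)).isInfix
            · rw [not_and_or, not_le, not_lt] at hgood
              right
              simp only [List.map_cons, List.sum_cons]
              have hlen : (listPow p.1 d ++ ρ).length = d * p.1.length + ρ.length := by
                rw [List.length_append, length_listPow]
              have heffσ : effectOf (listPow p.1 d ++ ρ)
                  = d * effectOf p.1 + effectOf ρ := by
                rw [effectOf_append, effectOf_listPow]
              have hmul : N * (p.1.length + (ps.map (fun p => p.1.length)).sum)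
                  = N * p.1.length + N * (ps.map (fun p => p.1.length)).sum :=
                Nat.mul_add _ _ _
              rcases hgood with hd | hslope
              · -- d < N : everything is small
                refine ⟨0, (listPow p.1 d ++ ρ).length, (Nat.zero_add _).symm, ?_, ?_⟩
                · have h1 : d * p.1.length ≤ N * p.1.length :=
                    Nat.mul_le_mul_right _ hd.le
                  rw [hlen]
                  linarith [Nat.zero_le (N * (ps.map (fun p => p.1.length)).sum), Nat.zero_le (ps.map (fun p => p.1.length + p.2.length)).sum, hρ.le]
                · have hall : (effectOf (listPow p.1 d ++ ρ) : ℚ)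
                      ≤ ((listPow p.1 d ++ ρ).length : ℚ) := by
                    exact_mod_cast effectOf_le_length hup
                  push_cast
                  push_cast at hall
                  linarith [hall]
              · -- slope ≤ e : the block is bad
                refine ⟨d * p.1.length, ρ.length, hlen, ?_, ?_⟩
                · linarith [hρ.le, Nat.zero_le (N * (p.1.length + (ps.map (fun p => p.1.length)).sum)), Nat.zero_le (ps.map (fun p => p.1.length + p.2.length)).sum]
                · have h1 : (effectOf p.1 : ℚ) = slopeOf p.1 * p.1.length :=
                    slope_mul_length hpne
                  have key : (d : ℚ) * (effectOf p.1 : ℚ)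
                      ≤ e * ((d * p.1.length : ℕ) : ℚ) := by
                    rw [h1]
                    push_cast
                    nlinarith [mul_le_mul_of_nonneg_left hslope
                      (show (0:ℚ) ≤ (d:ℚ) * (p.1.length : ℚ) by positivity)]
                  rw [heffσ]
                  push_cast
                  push_cast at key
                  linarith
          · -- σ = block ++ σ'
            have hup' : ∀ t ∈ σ', t.2.2.1 ≤ 1 := fun t ht =>
              hup t (List.mem_append_right _ ht)
            have hupb : ∀ t ∈ listPow p.1 c ++ p.2, t.2.2.1 ≤ 1 := fun t ht =>
              hup t (List.mem_append_left _ ht)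
            have hsuf : σ' <:+ listPow p.1 c ++ p.2 ++ σ' := List.suffix_append _ _
            by_cases hgood : N ≤ c ∧ e < slopeOf p.1
            · refine Or.inl ⟨p, List.mem_cons_self, ?_, hgood.2⟩
              exact ((listPow_prefix_listPow p.1 hgood.1).trans
                (by rw [List.append_assoc]; exact List.prefix_append _ _)).isInfix
            · rcases ih cs σ' (fun q hq => hne q (List.mem_cons_of_mem p hq))
                hup' h1 with ⟨q, hq, hinf, hsl⟩ | ⟨Lb, Ls, hl, hLs, heff⟩
              · exact Or.inl ⟨q, List.mem_cons_of_mem p hq,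
                  hinf.trans hsuf.isInfix, hsl⟩
              · right
                rw [not_and_or, not_le, not_lt] at hgood
                simp only [List.map_cons, List.sum_cons]
                have hlenσ : (listPow p.1 c ++ p.2 ++ σ').length
                    = c * p.1.length + p.2.length + σ'.length := by
                  rw [List.length_append, List.length_append, length_listPow]
                have heffσ : effectOf (listPow p.1 c ++ p.2 ++ σ')
                    = c * effectOf p.1 + effectOf p.2 + effectOf σ' := by
                  rw [effectOf_append, effectOf_append, effectOf_listPow]
                have heffb : (effectOf p.2 : ℚ) ≤ (p.2.length : ℚ) := by
                  exact_mod_cast effectOf_le_length (fun t ht =>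
                    hupb t (List.mem_append_right _ ht))
                have hmul : N * (p.1.length + (ps.map (fun p => p.1.length)).sum)
                    = N * p.1.length + N * (ps.map (fun p => p.1.length)).sum :=
                  Nat.mul_add _ _ _
                rcases hgood with hc | hslope
                · -- c < N : first block is small
                  refine ⟨Lb, c * p.1.length + p.2.length + Ls, ?_, ?_, ?_⟩
                  · rw [hlenσ, hl]; ring
                  · have h1 : c * p.1.length ≤ N * p.1.length :=
                      Nat.mul_le_mul_right _ hc.le
                    linarith [hLs, hmul, Nat.zero_le (N * (ps.map (fun p => p.1.length)).sum), Nat.zero_le (ps.map (fun p => p.1.length + p.2.length)).sum]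
                  · have h3 : (effectOf (listPow p.1 c ++ p.2) : ℚ)
                        ≤ ((listPow p.1 c ++ p.2).length : ℚ) := by
                      exact_mod_cast effectOf_le_length hupb
                    have h4 : (listPow p.1 c ++ p.2).length
                        = c * p.1.length + p.2.length := by
                      rw [List.length_append, length_listPow]
                    have h5 : effectOf (listPow p.1 c ++ p.2)
                        = c * effectOf p.1 + effectOf p.2 := by
                      rw [effectOf_append, effectOf_listPow]
                    rw [h4, h5] at h3
                    rw [heffσ]
                    push_cast
                    push_cast at h3 heff
                    linarith
                · -- slope ≤ e : first block is bad
                  refine ⟨c * p.1.length + Lb, p.2.length + Ls, ?_, ?_, ?_⟩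
                  · rw [hlenσ, hl]; ring
                  · linarith [hLs, hmul, Nat.zero_le (N * p.1.length), Nat.zero_le p.1.length]
                  · have h1 : (effectOf p.1 : ℚ) = slopeOf p.1 * p.1.length :=
                      slope_mul_length hpne
                    have key : (c : ℚ) * (effectOf p.1 : ℚ)
                        ≤ e * ((c : ℚ) * (p.1.length : ℚ)) := by
                      rw [h1]
                      nlinarith [mul_le_mul_of_nonneg_left hslope
                        (show (0:ℚ) ≤ (c:ℚ) * (p.1.length : ℚ) by positivity)]
                    rw [heffσ]
                    push_cast
                    push_cast at heff
                    nlinarith [key, heffb, heff]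

end Helpers3
section Helpers4

lemma card_filter_eq_countP_sort (s : Finset ℚ) (p : ℚ → Prop) [DecidablePred p] :
    (s.filter p).card = (s.sort (· ≤ ·)).countP (fun q => decide (p q)) := by
  rw [(Finset.sort_perm_toList s (· ≤ ·)).countP_eq]
  show _ = List.countP _ s.val.toList
  rw [← Multiset.coe_countP, Multiset.coe_toList, Multiset.countP_eq_card_filter]
  rfl

lemma sorted_getElem_neg : ∀ (l : List ℚ), l.Pairwise (· < ·) →
    ∀ k (hk : k < l.length), k < l.countP (fun q => decide (q < 0)) → l[k] < 0 := by
  intro l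
  induction l with
  | nil => intro _ k hk; simp at hk
  | cons a t ih =>
      intro hs k hk hcount
      rcases List.pairwise_cons.mp hs with ⟨ha, ht⟩
      cases k with
      | zero =>
          simp only [List.getElem_cons_zero]
          by_contra h
          push_neg at h
          have h0 : (a :: t).countP (fun q => decide (q < 0)) = 0 := by
            rw [List.countP_eq_zero]
            intro q hq
            rcases List.mem_cons.mp hq with rfl | hq
            · simpa using not_lt.mpr h
            · simpa using not_lt.mpr (le_of_lt (lt_of_le_of_lt h (ha q hq)))
          omega
      | succ n =>
          simp only [List.getElem_cons_succ]
          have hk' : n < t.length := by simp at hk; omega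
          have hc := List.countP_cons (p := fun q => decide (q < 0)) (a := a) (l := t)
          have hite : (if decide (a < 0) = true then 1 else 0) ≤ 1 := by
            split <;> omega
          exact ih ht n hk' (by omega)

lemma numNegSlopes_le (b : ℕ) : numNegSlopes b ≤ (basicSlopes b).card :=
  Finset.card_filter_le _ _

lemma slopeE_mem {b i : ℕ} (h1 : 1 ≤ i) (h2 : i ≤ (basicSlopes b).card) :
    slopeE b i ∈ basicSlopes b := by
  have hlen : i - 1 < ((basicSlopes b).sort (· ≤ ·)).length := by
    rw [Finset.length_sort]; omega
  rw [slopeE, List.getD_eq_getElem _ _ hlen]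
  exact (Finset.mem_sort _).mp (List.getElem_mem hlen)

lemma slopeE_neg {b i : ℕ} (h1 : 1 ≤ i) (h2 : i ≤ numNegSlopes b) :
    slopeE b i < 0 := by
  have hcard := numNegSlopes_le b
  have hlen : i - 1 < ((basicSlopes b).sort (· ≤ ·)).length := by
    rw [Finset.length_sort]; omega
  rw [slopeE, List.getD_eq_getElem _ _ hlen]
  apply sorted_getElem_neg _ (Finset.sortedLT_sort _).pairwise _ hlen
  have hc : numNegSlopes b
      = ((basicSlopes b).sort (· ≤ ·)).countP (fun q => decide (q < 0)) :=
    card_filter_eq_countP_sort _ _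
  omega

lemma slopeE_mono {b i j : ℕ} (h1 : 1 ≤ i) (hij : i ≤ j)
    (hj : j ≤ (basicSlopes b).card) : slopeE b i ≤ slopeE b j := by
  have hlj : j - 1 < ((basicSlopes b).sort (· ≤ ·)).length := by
    rw [Finset.length_sort]; omega
  have hli : i - 1 < ((basicSlopes b).sort (· ≤ ·)).length := by
    rw [Finset.length_sort]; omega
  rw [slopeE, slopeE, List.getD_eq_getElem _ _ hli, List.getD_eq_getElem _ _ hlj]
  have hs := Finset.pairwise_sort (basicSlopes b) (· ≤ ·)
  have := hs.rel_get_of_le (a := ⟨i - 1, hli⟩) (b := ⟨j - 1, hlj⟩)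
    (by simp [Fin.mk_le_mk]; omega)
  simpa [List.get_eq_getElem] using this

lemma exists_slopeE_eq {b : ℕ} {q : ℚ} (hq : q ∈ basicSlopes b) :
    ∃ j, 1 ≤ j ∧ j ≤ (basicSlopes b).card ∧ slopeE b j = q := by
  have hmem : q ∈ (basicSlopes b).sort (· ≤ ·) := (Finset.mem_sort _).mpr hq
  obtain ⟨n, hn, hget⟩ := List.mem_iff_getElem.mp hmem
  refine ⟨n + 1, by omega, ?_, ?_⟩
  · rw [← Finset.length_sort (α := ℚ) (· ≤ ·) (s := basicSlopes b)]
    omega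
  · rw [slopeE]
    simp only [Nat.add_sub_cancel]
    rw [List.getD_eq_getElem _ _ hn]
    exact hget

lemma slopeOf_mem_basicSlopes {St : Type} {b : ℕ} {β : List (OTrans St)}
    (hβ : β ≠ []) (hlen : β.length ≤ b)
    (heff : ∀ t ∈ β, t.2.2.1 = -1 ∨ t.2.2.1 = 0 ∨ t.2.2.1 = 1) :
    slopeOf β ∈ basicSlopes b := by
  have hpos : 0 < β.length := List.length_pos_of_ne_nil hβ
  have h1 : effectOf β ≤ β.length := effectOf_le_length (fun t ht => by
    rcases heff t ht with h | h | h <;> omega)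
  have h2 : -(β.length : ℤ) ≤ effectOf β := neg_length_le_effectOf (fun t ht => by
    rcases heff t ht with h | h | h <;> omega)
  rw [basicSlopes, Finset.mem_filter, Finset.mem_image]
  constructor
  · refine ⟨(effectOf β, β.length), ?_, rfl⟩
    rw [Finset.mem_product]
    constructor
    · rw [Finset.mem_Icc]; constructor <;> [omega; omega]
    · rw [Finset.mem_Icc]; omega
  · show |slopeOf β| ≤ 1
    rw [slopeOf, abs_div]
    rw [div_le_one (by positivity : (0:ℚ) < |(β.length : ℚ)|)]
    rw [abs_of_nonneg (by positivity : (0:ℚ) ≤ (β.length : ℚ))]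
    rw [abs_le]
    constructor
    · exact_mod_cast h2
    · exact_mod_cast h1

lemma neg_basic_slope_facts {b : ℕ} {q : ℚ} (hq : q ∈ basicSlopes b) (hneg : q < 0) :
    1 ≤ (-q).num ∧ (-q).num ≤ ((-q).den : ℤ) ∧ (-q).den ≤ b := by
  rw [basicSlopes, Finset.mem_filter, Finset.mem_image] at hq
  obtain ⟨⟨⟨z, n⟩, hmem, heq⟩, habs⟩ := hq
  rw [Finset.mem_product, Finset.mem_Icc, Finset.mem_Icc] at hmem
  have hn1 : 1 ≤ n := hmem.2.1
  have hnb : n ≤ b := hmem.2.2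
  have habs' := abs_le.mp habs
  have hle1 : -q ≤ 1 := by linarith [habs'.1]
  have hnum : 1 ≤ (-q).num := Rat.num_pos.mpr (by linarith)
  refine ⟨hnum, ?_, ?_⟩
  · have hden0 : ((-q).den : ℚ) ≠ 0 := by positivity
    have h := Rat.num_div_den (-q)
    have hnd : ((-q).num : ℚ) = (-q) * ((-q).den : ℚ) := (div_eq_iff hden0).mp h
    have hd : (0:ℚ) ≤ ((-q).den : ℚ) := by positivity
    have : ((-q).num : ℚ) ≤ ((-q).den : ℚ) := by
      rw [hnd]; nlinarith
    exact_mod_cast this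
  · have hq' : -q = Rat.divInt (-z) n := by
      rw [Rat.divInt_eq_div, ← heq]
      push_cast
      ring
    have hdvd : ((-q).den : ℤ) ∣ (n : ℤ) := by
      rw [hq']
      exact_mod_cast Rat.den_dvd (-z) n
    have : ((-q).den : ℤ) ≤ (n : ℤ) :=
      Int.le_of_dvd (by exact_mod_cast hn1) hdvd
    omega

lemma lcmB_pos (b : ℕ) : 0 < lcmB b := by
  rw [lcmB]
  rcases Nat.eq_zero_or_pos ((Finset.Icc 1 (2 * b ^ 3)).lcm id) with h | h
  · rw [Finset.lcm_eq_zero_iff] at h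
    simp only [Set.mem_image, id] at h
    obtain ⟨x, hx, hx0⟩ := h
    rw [Finset.mem_Icc] at hx
    omega
  · exact h

lemma bigP_pos {b P' : ℕ} (hP' : 1 ≤ P') : 0 < bigP b P' := by
  rw [bigP]
  exact Nat.mul_pos (lcmB_pos b) hP'

end Helpers4
section Helpers5

variable {St AP : Type}

lemma lps_flat_length (π : LPS St) :
    π.flat.length
      = π.head.length + (π.segs.map (fun p => p.1.length + p.2.length)).sum := by
  rw [LPS.flat, List.length_append, List.length_flatten, List.map_map]
  congr 1
  apply congrArg List.sum
  apply List.map_congr_left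
  intro p _
  simp

lemma mem_flat_of_mem_cycle {π : LPS St} {p : List (OTrans St) × List (OTrans St)}
    (hp : p ∈ π.segs) {t : OTrans St} (ht : t ∈ p.1) : t ∈ π.flat := by
  rw [LPS.flat]
  apply List.mem_append_right
  rw [List.mem_flatten]
  exact ⟨p.1 ++ p.2, List.mem_map_of_mem hp, List.mem_append_left _ ht⟩

lemma cycle_len_le {π : LPS St} {p : List (OTrans St) × List (OTrans St)}
    (hp : p ∈ π.segs) :
    p.1.length ≤ (π.segs.map (fun p => p.1.length + p.2.length)).sum := by
  have h1 : p.1.length + p.2.length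
      ≤ (π.segs.map (fun p => p.1.length + p.2.length)).sum :=
    List.single_le_sum (fun x _ => Nat.zero_le x) _ (List.mem_map_of_mem hp)
  omega

end Helpers5
section Helpers6

/-- The final numeric contradiction for Segment `i ≥ 1`. -/
lemma final_numeric (B Q x y Lb Ls hl L X T V e : ℚ)
    (hB : 3 ≤ B) (hQ : 1 ≤ Q) (hx1 : 1 ≤ x) (hxy : x ≤ y) (hyB : y ≤ B)
    (hLs0 : 0 ≤ Ls) (hLb0 : 0 ≤ Lb) (hhl0 : 0 ≤ hl) (hhlB : hl ≤ B)
    (hLsB : Ls ≤ B^5 * Q + B)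
    (hL : L = hl + (Lb + Ls))
    (hlow : X - 1 - B^8 * Q + B^9 * Q / 2 ≤ L)
    (hXx : X * x = y * (V - T))
    (hcQ : T < V + B + e * Lb + Ls)
    (hey : e * y = -x) : False := by
  have hx0 : (0:ℚ) < x := by linarith
  have hy0 : (0:ℚ) < y := by linarith
  have hB0 : (0:ℚ) ≤ B := by linarith
  have t1 := mul_lt_mul_of_pos_left hcQ hy0
  have t2 : y * (e * Lb) = -(x * Lb) := by
    calc y * (e * Lb) = (e * y) * Lb := by ring
      _ = -(x * Lb) := by rw [hey]; ring
  have t1' : y * T < y * V + y * B + y * (e * Lb) + y * Ls := by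
    have hexp : y * (V + B + e * Lb + Ls) = y * V + y * B + y * (e * Lb) + y * Ls := by
      ring
    linarith [t1, hexp]
  have hXx2 : y * (V - T) = y * V - y * T := by ring
  have step1 : x * Lb < X * x + y * B + y * Ls := by
    linarith [t1', t2, hXx, hXx2]
  have e2 : x * L = x * hl + x * Lb + x * Ls := by rw [hL]; ring
  have step2 : x * L < X * x + y * B + y * Ls + x * hl + x * Ls := by
    linarith [step1, e2]
  have hB2 : (9:ℚ) ≤ B^2 := by nlinarith
  have hB4 : (81:ℚ) ≤ B^4 := by nlinarith [hB2]
  have hB8 : (6561:ℚ) ≤ B^8 := by nlinarith [hB4]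
  have hQ0 : (0:ℚ) < Q := by linarith
  have c1 : (6561:ℚ) * 1 ≤ B^8 * Q :=
    mul_le_mul hB8 hQ (by norm_num) (by positivity)
  have c2 : 3 * (B^8 * Q) ≤ B * (B^8 * Q) :=
    mul_le_mul_of_nonneg_right hB (by positivity)
  have c3 : B * (B^8 * Q) = B^9 * Q := by ring
  have hC : (0:ℚ) ≤ B^9 * Q / 2 - B^8 * Q - 1 := by linarith
  have step3 : X * x + (B^9 * Q / 2 - B^8 * Q - 1) ≤ x * L := by
    have t3 : x * (X + (B^9 * Q / 2 - B^8 * Q - 1)) ≤ x * L :=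
      mul_le_mul_of_nonneg_left (by linarith) hx0.le
    have t4 : (B^9 * Q / 2 - B^8 * Q - 1) ≤ x * (B^9 * Q / 2 - B^8 * Q - 1) :=
      le_mul_of_one_le_left hC hx1
    have e3 : x * (X + (B^9 * Q / 2 - B^8 * Q - 1))
        = x * X + x * (B^9 * Q / 2 - B^8 * Q - 1) := by ring
    have e4 : x * X = X * x := by ring
    linarith [t3, t4, e3, e4]
  have q1 : y * Ls ≤ B * (B^5 * Q + B) := mul_le_mul hyB hLsB hLs0 hB0
  have q2 : x * Ls ≤ B * (B^5 * Q + B) := mul_le_mul (le_trans hxy hyB) hLsB hLs0 hB0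
  have q3 : x * hl ≤ B * B := mul_le_mul (le_trans hxy hyB) hhlB hhl0 hB0
  have q4 : y * B ≤ B * B := mul_le_mul_of_nonneg_right hyB hB0
  have eq5 : B * (B^5 * Q + B) = B^6 * Q + B^2 := by ring
  have fin : B^9 * Q / 2 - B^8 * Q - 1 < 2 * (B^6 * Q) + 4 * B^2 := by
    linarith [step2, step3, q1, q2, q3, q4, eq5]
  have g1 : 3 * (B^8 * Q) ≤ B^9 * Q := by linarith [c2, c3]
  have d1 : 9 * (B^6 * Q) ≤ B^2 * (B^6 * Q) :=
    mul_le_mul_of_nonneg_right hB2 (by positivity)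
  have d2 : B^2 * (B^6 * Q) = B^8 * Q := by ring
  have g2 : 9 * (B^6 * Q) ≤ B^8 * Q := by linarith
  have g3a : B^2 * 81 ≤ B^2 * B^4 := mul_le_mul_of_nonneg_left hB4 (by positivity)
  have g3b : B^6 * 1 ≤ B^6 * Q := mul_le_mul_of_nonneg_left hQ (by positivity)
  have g3c : B^2 * B^4 = B^6 := by ring
  have g3 : 81 * B^2 ≤ B^6 * Q := by linarith
  linarith [fin, g1, g2, g3, hB2]

end Helpers6
set_option maxHeartbeats 2000000 in
/-- (Lemma `SegmentsCycles`, item 1.) Let `τ` be a basic path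
of `A`, or a prefix of one, valid from a configuration `(s, v)` with `v > cT`,
and let `i ≤ m`. If the length of `τ` is at least `𝔰ᵢ(v) + sT/2` and every
counter value along `τ` stays strictly above `T′`, then `τ` contains `b⁴·P`
consecutive repetitions of a cycle `β` of length at most `b` whose slope is a
basic slope `𝑒_j` with `j > i`. (Since `sT` is even, the length hypothesis is
stated multiplied by `2`.) -/
theorem segments_have_slow_cycles {St AP : Type} [Fintype St] (A : OCA St AP)
    (b : ℕ) (hb : 3 ≤ b)
    (hbasic : ∀ (c c' : St × ℕ) (ℓ : ℕ), A.ReachN ℓ c c' →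
      ∃ τ : List (OTrans St), τ.length = ℓ ∧ A.IsBasic b τ c ∧ A.RunsTo τ c c')
    (T' P' : ℕ) (hP' : 1 ≤ P') (hT' : T' < bigP b P')
    (s : St) (v : ℕ) (hv : cThresh b P' < v)
    (τ τ₀ : List (OTrans St)) (hpre : τ <+: τ₀) (hτ₀ : A.IsBasic b τ₀ (s, v))
    (i : ℕ) (hi : i ≤ numNegSlopes b)
    (hlen : 2 * segStart b T' P' v i + (sThresh b P' : ℤ) ≤ 2 * (τ.length : ℤ))
    (habove : A.CountersAbove τ (s, v) T') :
    ∃ (β : List (OTrans St)) (j : ℕ),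
      IsCycle β ∧ β.length ≤ b ∧
      listPow β (b ^ 4 * bigP b P') <:+: τ ∧
      i < j ∧ j ≤ (basicSlopes b).card ∧ slopeOf β = slopeE b j := by
  classical
  obtain ⟨π, c₀, ⟨hdelta, hchain, hcycles⟩, hflatlen, ⟨cs, hcslen, hshape⟩, hrun₀⟩ := hτ₀
  -- the run along τ and its basic consequences
  obtain ⟨ρ₀, hτ₀eq⟩ := hpre
  rw [← hτ₀eq] at hrun₀
  obtain ⟨c', hrunτ, -⟩ := (runsTo_append A τ ρ₀ (s, v) c₀).mp hrun₀
  have hτdelta : ∀ t ∈ τ, t ∈ A.delta := runsTo_delta A hrunτ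
  have hup : ∀ t ∈ τ, t.2.2.1 ≤ 1 := fun t ht => by
    rcases A.effect_mem t (hτdelta t ht) with h | h | h <;> omega
  have hdn : ∀ t ∈ τ, -1 ≤ t.2.2.1 := fun t ht => by
    rcases A.effect_mem t (hτdelta t ht) with h | h | h <;> omega
  have hendT : T' < c'.2 := habove τ c' (List.prefix_refl τ) hrunτ
  have heffτ : (c'.2 : ℤ) = v + effectOf τ := by
    have := runsTo_effect A hrunτ; simpa using this
  have hcounter : (T' : ℤ) < (v : ℤ) + effectOf τ := by
    rw [← heffτ]; exact_mod_cast hendT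
  have hP : 1 ≤ bigP b P' := bigP_pos hP'
  -- length bookkeeping
  have hsum2 : (π.segs.map (fun p => p.1.length + p.2.length)).sum ≤ b := by
    have := lps_flat_length π; omega
  have hheadlen : π.head.length ≤ b := by
    have := lps_flat_length π; omega
  have hsum1 : (π.segs.map (fun p => p.1.length)).sum
      ≤ (π.segs.map (fun p => p.1.length + p.2.length)).sum :=
    List.sum_le_sum (fun p _ => Nat.le_add_right _ _)
  -- nonnegativity of the segment start
  have hbQ : (3:ℚ) ≤ (b:ℚ) := by exact_mod_cast hb
  have hPQ : (1:ℚ) ≤ (bigP b P' : ℚ) := by exact_mod_cast hP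
  have hTv : (T' : ℚ) < (bigP b P' : ℚ) := by exact_mod_cast hT'
  have hvQ : (b:ℚ)^11 * (bigP b P' : ℚ) < (v:ℚ) := by
    have : cThresh b P' = b^11 * bigP b P' := rfl
    exact_mod_cast this ▸ hv
  have hvT : ((v:ℚ) - (T':ℚ)) ≥ (b:ℚ)^8 * (bigP b P' : ℚ) + 1 := by
    have h8 : (1:ℚ) ≤ (b:ℚ)^8 := one_le_pow₀ (by linarith)
    have h11 : (b:ℚ)^11 = (b:ℚ)^8 * (b:ℚ)^3 := by ring
    have h3 : (27:ℚ) ≤ (b:ℚ)^3 := by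
      have : (3:ℚ)^3 ≤ (b:ℚ)^3 := pow_le_pow_left₀ (by norm_num) hbQ 3
      linarith [this]
    nlinarith [mul_le_mul_of_nonneg_left h3 (by positivity : (0:ℚ) ≤ (b:ℚ)^8 * (bigP b P' : ℚ))]
  have hsg : 0 ≤ segStart b T' P' v i := by
    rcases Nat.eq_zero_or_pos i with rfl | hi1
    · simp [segStart]
    · rw [segStart, if_neg (by omega)]
      have hmem := slopeE_mem hi1 (le_trans hi (numNegSlopes_le b))
      have hneg := slopeE_neg hi1 hi
      obtain ⟨hx1, hxy, hyb⟩ := neg_basic_slope_facts hmem hneg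
      have hx0 : (0:ℚ) < ((-(slopeE b i)).num : ℚ) := by exact_mod_cast hx1
      have hy0 : (0:ℚ) < ((-(slopeE b i)).den : ℚ) := by
        have := (-(slopeE b i)).den_pos
        exact_mod_cast this
      have hxyQ : ((-(slopeE b i)).num : ℚ) ≤ ((-(slopeE b i)).den : ℚ) := by
        exact_mod_cast hxy
      have hXge : ((v:ℚ) - (T':ℚ))
          ≤ ((-(slopeE b i)).den : ℚ) * ((v:ℚ) - (T':ℚ)) / ((-(slopeE b i)).num : ℚ) := by
        rw [le_div_iff₀ hx0]
        have h0 : (0:ℚ) ≤ (v:ℚ) - (T':ℚ) := by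
          have : (0:ℚ) ≤ (b:ℚ)^8 * (bigP b P' : ℚ) := by positivity
          linarith
        calc ((v:ℚ) - (T':ℚ)) * ((-(slopeE b i)).num : ℚ)
            = ((-(slopeE b i)).num : ℚ) * ((v:ℚ) - (T':ℚ)) := by ring
          _ ≤ ((-(slopeE b i)).den : ℚ) * ((v:ℚ) - (T':ℚ)) :=
              mul_le_mul_of_nonneg_right hxyQ h0
      have hfl : ((b:ℤ)^8 * (bigP b P' : ℤ))
          ≤ ⌊((-(slopeE b i)).den : ℚ) * ((v:ℚ) - (T':ℚ)) / ((-(slopeE b i)).num : ℚ)⌋ := by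
        rw [Int.le_floor]
        push_cast
        linarith
      omega
  -- τ decomposes along the LPS
  rcases prefix_append_cases (hshape ▸ (⟨ρ₀, hτ₀eq⟩ : τ <+: τ₀)) with hsmall | ⟨σ, hτeq, hσ⟩
  · -- τ is a prefix of the head: too short, contradiction
    exfalso
    have hτb : τ.length ≤ b := le_trans hsmall.length_le hheadlen
    have hsT : (sThresh b P' : ℤ) = (b : ℤ) ^ 9 * (bigP b P' : ℤ) := by
      rw [sThresh]; push_cast; ring
    have h2 : (b:ℤ)^9 * (bigP b P' : ℤ) ≤ 2 * (τ.length : ℤ) := by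
      rw [← hsT]; linarith
    have hbZ : (3:ℤ) ≤ (b:ℤ) := by exact_mod_cast hb
    have hPZ : (1:ℤ) ≤ (bigP b P' : ℤ) := by exact_mod_cast hP
    have hτbZ : (τ.length : ℤ) ≤ (b:ℤ) := by exact_mod_cast hτb
    have h8 : (3:ℤ)^8 ≤ (b:ℤ)^8 := pow_le_pow_left₀ (by norm_num) hbZ 8
    have h9 : (b:ℤ)^9 = (b:ℤ) * (b:ℤ)^8 := by ring
    nlinarith [mul_le_mul_of_nonneg_left h8 (by linarith : (0:ℤ) ≤ (b:ℤ)),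
      mul_le_mul_of_nonneg_left hPZ (by positivity : (0:ℤ) ≤ (b:ℤ)^9)]
  · -- main case
    have hupσ : ∀ t ∈ σ, t.2.2.1 ≤ 1 := fun t ht =>
      hup t (hτeq ▸ List.mem_append_right _ ht)
    have hne : ∀ p ∈ π.segs, p.1 ≠ [] := fun p hp => (hcycles p hp).1
    set N := b ^ 4 * bigP b P' with hNdef
    set eC := if i = 0 then (-2 : ℚ) else slopeE b i with heCdef
    rcases core_lemma N eC π.segs cs σ hne hupσ hσ with
      ⟨p, hp, hinf, hsl⟩ | ⟨Lb, Ls, hLbLs, hLs, heffσ⟩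
    · -- found a long repetition of a fast cycle
      have hplen : p.1.length ≤ b := le_trans (cycle_len_le hp) hsum2
      have hmemflat : ∀ t ∈ p.1, t ∈ A.delta := fun t ht =>
        hdelta t (mem_flat_of_mem_cycle hp ht)
      have hbasicslope : slopeOf p.1 ∈ basicSlopes b :=
        slopeOf_mem_basicSlopes (hne p hp) hplen
          (fun t ht => A.effect_mem t (hmemflat t ht))
      obtain ⟨j, hj1, hjc, hjeq⟩ := exists_slopeE_eq hbasicslope
      refine ⟨p.1, j, hcycles p hp, hplen,
        hinf.trans (List.IsSuffix.isInfix ⟨π.head, hτeq.symm⟩),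
        ?_, hjc, hjeq.symm⟩
      rcases Nat.eq_zero_or_pos i with rfl | hi1
      · omega
      · rw [heCdef, if_neg (by omega)] at hsl
        by_contra hji
        push_neg at hji
        have := slopeE_mono hj1 hji (le_trans hi (numNegSlopes_le b))
        rw [hjeq] at this
        linarith
    · -- no fast cycle: counter would drop below T', contradiction
      exfalso
      have hLsb : Ls ≤ N * b + b := by
        have h1 : N * (π.segs.map (fun p => p.1.length)).sum ≤ N * b :=
          Nat.mul_le_mul_left N (le_trans hsum1 hsum2)
        omega
      have hlentau : τ.length = π.head.length + (Lb + Ls) := by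
        rw [hτeq, List.length_append, hLbLs]
      have heffhead : effectOf π.head ≤ π.head.length :=
        effectOf_le_length (fun t ht => hup t (hτeq ▸ List.mem_append_left _ ht))
      have hefftau : effectOf τ = effectOf π.head + effectOf σ := by
        rw [hτeq, effectOf_append]
      rcases Nat.eq_zero_or_pos i with rfl | hi1
      · -- i = 0 : pure length contradiction
        rw [heCdef, if_pos rfl] at heffσ
        have hdnσ : ∀ t ∈ σ, -1 ≤ t.2.2.1 := fun t ht =>
          hdn t (hτeq ▸ List.mem_append_right _ ht)
        have hlow : -((σ.length : ℤ)) ≤ effectOf σ := neg_length_le_effectOf hdnσ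
        have hLb2Ls : Lb ≤ 2 * Ls := by
          have hlow' : -((σ.length : ℚ)) ≤ (effectOf σ : ℚ) := by exact_mod_cast hlow
          rw [hLbLs] at hlow'
          push_cast at hlow' heffσ
          have : (Lb : ℚ) ≤ 2 * Ls := by linarith
          exact_mod_cast this
        have hseg0 : segStart b T' P' v 0 = 0 := by simp [segStart]
        rw [hseg0] at hlen
        have h2 : 2 * 0 + sThresh b P' ≤ 2 * τ.length := by exact_mod_cast hlen
        have hsTeq : sThresh b P' = b^9 * bigP b P' := rfl
        have h2' : b^9 * bigP b P' ≤ 2 * τ.length := by omega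
        have h81 : 81 ≤ b^4 := by
          calc (81:ℕ) = 3^4 := by norm_num
          _ ≤ b^4 := Nat.pow_le_pow_left hb 4
        have hN : N * b + b = b^5 * bigP b P' + b := by rw [hNdef]; ring
        have s1 : 2 * τ.length ≤ 8 * b + 6 * (b^5 * bigP b P') := by
          linarith [hlentau, hheadlen, hLb2Ls, hLsb, hN]
        have s2 : b^4 * (b^5 * bigP b P') = b^9 * bigP b P' := by ring
        have s3 : 81 * (b^5 * bigP b P') ≤ b^9 * bigP b P' := by
          rw [← s2]; exact Nat.mul_le_mul_right _ h81
        have s4 : b ≤ b^5 * bigP b P' := by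
          calc b ≤ b^5 := Nat.le_self_pow (by norm_num) b
          _ ≤ b^5 * bigP b P' := Nat.le_mul_of_pos_right _ hP
        linarith
      · -- i ≥ 1 : slope contradiction
        rw [heCdef, if_neg (by omega)] at heffσ
        have hmem := slopeE_mem hi1 (le_trans hi (numNegSlopes_le b))
        have hneg := slopeE_neg hi1 hi
        obtain ⟨hx1, hxy, hyb⟩ := neg_basic_slope_facts hmem hneg
        have hx0 : (0:ℚ) < ((-(slopeE b i)).num : ℚ) := by exact_mod_cast hx1
        have hy0 : (0:ℚ) < ((-(slopeE b i)).den : ℚ) := by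
          have := (-(slopeE b i)).den_pos
          exact_mod_cast this
        have hx1Q : (1:ℚ) ≤ ((-(slopeE b i)).num : ℚ) := by exact_mod_cast hx1
        have hxyQ : ((-(slopeE b i)).num : ℚ) ≤ ((-(slopeE b i)).den : ℚ) := by
          exact_mod_cast hxy
        have hybQ : ((-(slopeE b i)).den : ℚ) ≤ (b:ℚ) := by exact_mod_cast hyb
        have hxbQ : ((-(slopeE b i)).num : ℚ) ≤ (b:ℚ) := le_trans hxyQ hybQ
        have hlen' : 2 * (⌊(((-(slopeE b i)).den : ℚ) * ((v : ℚ) - (T' : ℚ))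
              / ((-(slopeE b i)).num : ℚ))⌋ - (b:ℤ)^8 * (bigP b P' : ℤ))
            + (b:ℤ)^9 * (bigP b P' : ℤ) ≤ 2 * (τ.length : ℤ) := by
          have h := hlen
          rw [segStart, if_neg (by omega : ¬ i = 0)] at h
          rw [show sThresh b P' = b ^ 9 * bigP b P' from rfl] at h
          push_cast at h ⊢
          linarith
        have hflQ : (((-(slopeE b i)).den : ℚ) * ((v : ℚ) - (T' : ℚ))
              / ((-(slopeE b i)).num : ℚ)) - 1
            < ((⌊(((-(slopeE b i)).den : ℚ) * ((v : ℚ) - (T' : ℚ))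
              / ((-(slopeE b i)).num : ℚ))⌋ : ℤ) : ℚ) :=
          Int.sub_one_lt_floor _
        have hlenQ : 2 * (((⌊(((-(slopeE b i)).den : ℚ) * ((v : ℚ) - (T' : ℚ))
              / ((-(slopeE b i)).num : ℚ))⌋ : ℤ) : ℚ) - (b:ℚ)^8 * (bigP b P' : ℚ))
            + (b:ℚ)^9 * (bigP b P' : ℚ) ≤ 2 * (τ.length : ℚ) := by
          exact_mod_cast hlen'
        have hlowL : (((-(slopeE b i)).den : ℚ) * ((v : ℚ) - (T' : ℚ))
              / ((-(slopeE b i)).num : ℚ)) - 1 - (b:ℚ)^8 * (bigP b P' : ℚ)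
            + (b:ℚ)^9 * (bigP b P' : ℚ) / 2 ≤ (τ.length : ℚ) := by
          linarith
        -- counter upper bound
        have hcQ : (T':ℚ) < (v:ℚ) + (b:ℚ) + slopeE b i * (Lb:ℚ) + (Ls:ℚ) := by
          have h1 : (effectOf τ : ℚ) = (effectOf π.head : ℚ) + (effectOf σ : ℚ) := by
            rw [hefftau]; push_cast; ring
          have h2 : (effectOf π.head : ℚ) ≤ (π.head.length : ℚ) := by
            exact_mod_cast heffhead
          have h2' : ((π.head.length : ℕ) : ℚ) ≤ (b:ℚ) := by exact_mod_cast hheadlen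
          have h3 : (T':ℚ) < (v:ℚ) + (effectOf τ : ℚ) := by exact_mod_cast hcounter
          linarith [heffσ]
        have hey : slopeE b i * ((-(slopeE b i)).den : ℚ) = -((-(slopeE b i)).num : ℚ) := by
          have h := Rat.num_div_den (-(slopeE b i))
          have h2 : ((-(slopeE b i)).num : ℚ) = -(slopeE b i) * ((-(slopeE b i)).den : ℚ) :=
            (div_eq_iff hy0.ne').mp h
          linarith
        have hXx : (((-(slopeE b i)).den : ℚ) * ((v : ℚ) - (T' : ℚ))
              / ((-(slopeE b i)).num : ℚ)) * ((-(slopeE b i)).num : ℚ)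
            = ((-(slopeE b i)).den : ℚ) * ((v : ℚ) - (T' : ℚ)) :=
          div_mul_cancel₀ _ hx0.ne'
        have hltau : (τ.length:ℚ) = (π.head.length:ℚ) + ((Lb:ℚ) + (Ls:ℚ)) := by
          exact_mod_cast hlentau
        have hLsQ : (Ls:ℚ) ≤ (b:ℚ)^5 * (bigP b P':ℚ) + (b:ℚ) := by
          have h5 : Ls ≤ b^5 * bigP b P' + b := by
            calc Ls ≤ N * b + b := hLsb
            _ = b^5 * bigP b P' + b := by rw [hNdef]; ring
          exact_mod_cast h5
        have hhlQ : (π.head.length:ℚ) ≤ (b:ℚ) := by exact_mod_cast hheadlen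
        exact final_numeric (b:ℚ) (bigP b P':ℚ) ((-(slopeE b i)).num : ℚ)
          ((-(slopeE b i)).den : ℚ) (Lb:ℚ) (Ls:ℚ) (π.head.length:ℚ) (τ.length:ℚ)
          (((-(slopeE b i)).den : ℚ) * ((v : ℚ) - (T' : ℚ)) / ((-(slopeE b i)).num : ℚ))
          (T':ℚ) (v:ℚ) (slopeE b i)
          hbQ hPQ hx1Q hxyQ hybQ (Nat.cast_nonneg _) (Nat.cast_nonneg _)
          (Nat.cast_nonneg _) hhlQ hLsQ hltau hlowL hXx hcQ hey
end
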